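/- For m > 0 let φ₀(λ) = (m/(2(2+m)))·λ(1−λ)·(4 + 2m − m(4+3m)λ(1−λ)), c₀ = 2m², and for λ ∈ (0,1) set ℱ_m(φ₀,c₀)(λ) = φ₀''(λ) + 2m·φ₀'(λ)/(1+mλ) + m²/(1+mλ) + 4m/(2+m) − (c₀/m²)·exp(∫_{1/2}^λ m/φ₀(x) dx)/(1+mλ)·((φ₀'(λ)+m)² + φ₀(λ)·φ₀''(λ)). Then there exist constants C > 0 and m₀ > 0 such that for all m ∈ (0, m₀] and all λ ∈ (0,1), |ℱ_m(φ₀,c₀)(λ)| ≤ C·m³; that is, (φ₀, c₀) is an approximate solution of ℱ_m = 0 to order m³. -/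

import Mathlib

/-!
Partial fractions give `m/φ₀ = 1/(λ(1-λ)) + m(4+3m)/D` with `D ≥ 4`, so
`exp ∫_{1/2}^λ m/φ₀ = λ/(1-λ) · K` with `|K - 1| ≤ 2m`. Substituting `K = 1` turns `ℱ_m(φ₀, c₀)`
into a rational function of `λ` and `m` whose numerator is divisible by `m³`, while the
coefficient of `K - 1` is `O(m²)`. Both polynomials are bounded on `[0,1]²` by the sum of the
absolute values of their coefficients.
-/

/-- The approximate momentum profile
`φ₀(λ) = (m/(2(2+m)))·λ(1-λ)·(4 + 2m - m(4+3m)λ(1-λ))`. -/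
noncomputable def phi0 (m : ℝ) : ℝ → ℝ := fun l =>
  (m / (2 * (2 + m))) * (l * (1 - l)) * (4 + 2 * m - m * (4 + 3 * m) * (l * (1 - l)))

/-- The adiabatic-limit operator `ℱ_m` evaluated at the approximate solution
`(φ₀, c₀)` with `c₀ = 2m²`. -/
noncomputable def Fm0 (m : ℝ) (l : ℝ) : ℝ :=
  deriv (deriv (phi0 m)) l + 2 * m * deriv (phi0 m) l / (1 + m * l) + m ^ 2 / (1 + m * l)
    + 4 * m / (2 + m)
    - ((2 * m ^ 2) / m ^ 2) * Real.exp (∫ x in (1 / 2 : ℝ)..l, m / phi0 m x) / (1 + m * l) *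
        ((deriv (phi0 m) l + m) ^ 2 + phi0 m l * deriv (deriv (phi0 m)) l)

open Real Set

def bivariatePoly {p q : ℕ} (c : Matrix (Fin p) (Fin q) ℝ) (x y : ℝ) : ℝ :=
  ∑ i, ∑ j, c i j * x ^ (i : ℕ) * y ^ (j : ℕ)

theorem abs_bivariatePoly_le {p q : ℕ} (c : Matrix (Fin p) (Fin q) ℝ) {x y : ℝ}
    (hx : |x| ≤ 1) (hy : |y| ≤ 1) : |bivariatePoly c x y| ≤ ∑ i, ∑ j, |c i j| := by
  refine (Finset.abs_sum_le_sum_abs _ _).trans (Finset.sum_le_sum fun i _ => ?_)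
  refine (Finset.abs_sum_le_sum_abs _ _).trans (Finset.sum_le_sum fun j _ => ?_)
  rw [abs_mul, abs_mul, abs_pow, abs_pow]
  calc |c i j| * |x| ^ (i : ℕ) * |y| ^ (j : ℕ) ≤ |c i j| * 1 * 1 := by
        gcongr
        · exact pow_le_one₀ (abs_nonneg x) hx
        · exact pow_le_one₀ (abs_nonneg y) hy
    _ = |c i j| := by ring

noncomputable def phi0' (m l : ℝ) : ℝ :=
  m / (2 * (2 + m)) * ((1 - 2 * l) * (4 + 2 * m - 2 * m * (4 + 3 * m) * (l * (1 - l))))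

noncomputable def phi0'' (m l : ℝ) : ℝ :=
  m / (2 * (2 + m)) * (-2 * (4 + 2 * m - 2 * m * (4 + 3 * m) * (l * (1 - l)))
    - 2 * m * (4 + 3 * m) * (1 - 2 * l) ^ 2)

theorem hasDerivAt_mul_one_sub (l : ℝ) : HasDerivAt (fun x : ℝ => x * (1 - x)) (1 - 2 * l) l :=
  ((hasDerivAt_id' l).mul ((hasDerivAt_id' l).const_sub 1)).congr_deriv (by ring)

theorem hasDerivAt_phi0 (m l : ℝ) : HasDerivAt (phi0 m) (phi0' m l) l := by
  have hu := hasDerivAt_mul_one_sub l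
  exact ((hu.const_mul (m / (2 * (2 + m)))).mul
    ((hu.const_mul (m * (4 + 3 * m))).const_sub (4 + 2 * m))).congr_deriv (by unfold phi0'; ring)

theorem hasDerivAt_phi0' (m l : ℝ) : HasDerivAt (phi0' m) (phi0'' m l) l := by
  have hu := hasDerivAt_mul_one_sub l
  exact ((((hasDerivAt_id' l).const_mul 2).const_sub 1).mul
    ((hu.const_mul (2 * m * (4 + 3 * m))).const_sub (4 + 2 * m))).const_mul (m / (2 * (2 + m)))
    |>.congr_deriv (by unfold phi0''; ring)

theorem deriv_phi0 (m : ℝ) : deriv (phi0 m) = phi0' m :=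
  funext fun l => (hasDerivAt_phi0 m l).deriv

theorem deriv_deriv_phi0 (m : ℝ) : deriv (deriv (phi0 m)) = phi0'' m := by
  rw [deriv_phi0]
  exact funext fun l => (hasDerivAt_phi0' m l).deriv

def phi0Cofactor (m x : ℝ) : ℝ := 4 + 2 * m - m * (4 + 3 * m) * (x * (1 - x))

theorem four_le_phi0Cofactor {m : ℝ} (hm0 : 0 ≤ m) (hm : m ≤ 4 / 3) (x : ℝ) :
    4 ≤ phi0Cofactor m x := by
  unfold phi0Cofactor
  nlinarith [mul_nonneg (mul_nonneg hm0 (by linarith : (0:ℝ) ≤ 4 + 3 * m)) (sq_nonneg (x - 1 / 2)),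
    mul_nonneg hm0 (by linarith : (0:ℝ) ≤ 4 - 3 * m)]

theorem m_div_phi0_eq {m x : ℝ} (hm : 0 < m) (hm' : m ≤ 4 / 3) (hx : x ∈ Ioo (0 : ℝ) 1) :
    m / phi0 m x = 1 / (x * (1 - x)) + m * (4 + 3 * m) / phi0Cofactor m x := by
  have hD := four_le_phi0Cofactor hm.le hm' x
  have hx0 : x ≠ 0 := hx.1.ne'
  have hx1 : 1 - x ≠ 0 := sub_ne_zero.mpr hx.2.ne'
  have hD0 : phi0Cofactor m x ≠ 0 := (four_pos.trans_le hD).ne'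
  rw [show phi0 m x = m / (2 * (2 + m)) * (x * (1 - x)) * phi0Cofactor m x from rfl]
  field_simp
  unfold phi0Cofactor
  ring

theorem intervalIntegrable_one_div_mul_one_sub {a b : ℝ} (ha : a ∈ Ioo (0 : ℝ) 1)
    (hb : b ∈ Ioo (0 : ℝ) 1) :
    IntervalIntegrable (fun x => 1 / (x * (1 - x))) MeasureTheory.volume a b := by
  refine ContinuousOn.intervalIntegrable (continuousOn_const.div (by fun_prop) fun x hx => ?_)
  obtain ⟨hx0, hx1⟩ := ordConnected_Ioo.uIcc_subset ha hb hx
  exact (mul_pos hx0 (sub_pos.mpr hx1)).ne'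

theorem integral_one_div_mul_one_sub {a b : ℝ} (ha : a ∈ Ioo (0 : ℝ) 1) (hb : b ∈ Ioo (0 : ℝ) 1) :
    ∫ x in a..b, 1 / (x * (1 - x)) = (log b - log (1 - b)) - (log a - log (1 - a)) := by
  have hsub : uIcc a b ⊆ Ioo 0 1 := ordConnected_Ioo.uIcc_subset ha hb
  refine intervalIntegral.integral_eq_sub_of_hasDerivAt (f := fun x => log x - log (1 - x))
    (fun x hx => ?_) ?_
  · obtain ⟨hx0, hx1⟩ := hsub hx
    have h1x : 1 - x ≠ 0 := sub_ne_zero.mpr hx1.ne'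
    refine ((hasDerivAt_log hx0.ne').sub ((hasDerivAt_log h1x).comp x
      ((hasDerivAt_id' x).const_sub 1))).congr_deriv ?_
    field_simp
    ring
  · exact intervalIntegrable_one_div_mul_one_sub ha hb

theorem abs_integral_div_phi0Cofactor_le {m l : ℝ} (hm0 : 0 ≤ m) (hm1 : m ≤ 1)
    (hl : l ∈ Icc (0 : ℝ) 1) :
    |∫ x in (1 / 2 : ℝ)..l, m * (4 + 3 * m) / phi0Cofactor m x| ≤ m := by
  have hbound : ∀ x ∈ uIoc (1 / 2 : ℝ) l, ‖m * (4 + 3 * m) / phi0Cofactor m x‖ ≤ 7 * m / 4 := by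
    intro x _
    have hD := four_le_phi0Cofactor hm0 (by linarith) x
    rw [Real.norm_eq_abs, abs_of_nonneg (by positivity)]
    calc m * (4 + 3 * m) / phi0Cofactor m x ≤ m * (4 + 3 * m) / 4 := by gcongr
      _ ≤ 7 * m / 4 := by nlinarith
  have hlen : |l - 1 / 2| ≤ 1 / 2 := abs_le.mpr ⟨by linarith [hl.1], by linarith [hl.2]⟩
  calc _ ≤ 7 * m / 4 * |l - 1 / 2| := intervalIntegral.norm_integral_le_of_norm_le_const hbound
    _ ≤ 7 * m / 4 * (1 / 2) := by gcongr
    _ ≤ m := by linarith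

theorem exp_integral_m_div_phi0 {m l : ℝ} (hm : 0 < m) (hm1 : m ≤ 1) (hl : l ∈ Ioo (0 : ℝ) 1) :
    ∃ K, |K - 1| ≤ 2 * m ∧ exp (∫ x in (1 / 2 : ℝ)..l, m / phi0 m x) = l / (1 - l) * K := by
  have hhalf : (1 / 2 : ℝ) ∈ Ioo 0 1 := by norm_num
  have hsub : uIcc (1 / 2) l ⊆ Ioo 0 1 := ordConnected_Ioo.uIcc_subset hhalf hl
  set J := ∫ x in (1 / 2 : ℝ)..l, m * (4 + 3 * m) / phi0Cofactor m x
  have hJ : |J| ≤ m := abs_integral_div_phi0Cofactor_le hm.le hm1 (Ioo_subset_Icc_self hl)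
  refine ⟨exp J, (abs_exp_sub_one_le (hJ.trans hm1)).trans (by linarith), ?_⟩
  have hcorr : IntervalIntegrable (fun x => m * (4 + 3 * m) / phi0Cofactor m x)
      MeasureTheory.volume (1 / 2) l :=
    (continuous_const.div (by unfold phi0Cofactor; fun_prop) fun x =>
      (four_pos.trans_le (four_le_phi0Cofactor hm.le (by linarith) x)).ne').intervalIntegrable _ _
  rw [intervalIntegral.integral_congr fun x hx => m_div_phi0_eq hm (by linarith) (hsub hx),
    intervalIntegral.integral_add (intervalIntegrable_one_div_mul_one_sub hhalf hl) hcorr,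
    integral_one_div_mul_one_sub hhalf hl, exp_add, show (1 : ℝ) - 1 / 2 = 1 / 2 by norm_num, sub_self, sub_zero, exp_sub, exp_log hl.1,
    exp_log (sub_pos.mpr hl.2)]

-- Rows are powers of `l`, columns powers of `m`: the numerator, divided by `m³`, of
-- `ℱ_m(φ₀, c₀)(l)` with the exponential replaced by `l/(1-l)`.
noncomputable def residualCoeffs : Matrix (Fin 7) (Fin 4) ℝ :=
  !![0, 0, 0, 0;
     -64, -104, -36, 0;
     656, 856, 264, 0;
     -1536, -2112, -864, -108;
     960, 2288, 1992, 612;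
     0, -1792, -2688, -1008;
     0, 896, 1344, 504]

-- `(l/(1-l)) · ((φ₀' + m)² + φ₀ φ₀'') = m² · bivariatePoly expTermCoeffs l m / (4(2+m)²)`.
noncomputable def expTermCoeffs : Matrix (Fin 7) (Fin 5) ℝ :=
  !![0, 0, 0, 0, 0;
     64, 64, 16, 0, 0;
     -96, -256, -224, -60, 0;
     0, 608, 856, 372, 54;
     0, -480, -1144, -996, -306;
     0, 0, 896, 1344, 504;
     0, 0, -448, -672, -252]

theorem Fm0_eq {m l K : ℝ} (hm : m ≠ 0) (h2m : 2 + m ≠ 0) (hml : 1 + m * l ≠ 0) (hl : l ≠ 1)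
    (hexp : exp (∫ x in (1 / 2 : ℝ)..l, m / phi0 m x) = l / (1 - l) * K) :
    Fm0 m l = (m ^ 3 * bivariatePoly residualCoeffs l m
      - 2 * (K - 1) * m ^ 2 * bivariatePoly expTermCoeffs l m)
      / (4 * (2 + m) ^ 2 * (1 + m * l)) := by
  have hl' : 1 - l ≠ 0 := sub_ne_zero.mpr (Ne.symm hl)
  rw [Fm0, deriv_deriv_phi0, deriv_phi0, hexp]
  simp only [bivariatePoly, residualCoeffs, expTermCoeffs, Fin.sum_univ_succ, Fin.sum_univ_zero,
    phi0, phi0', phi0'', Matrix.of_apply, Matrix.cons_val', Matrix.cons_val, Matrix.cons_val_zero,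
    Matrix.cons_val_one, Matrix.cons_val_fin_one, Fin.succ_zero_eq_one, Fin.succ_one_eq_two,
    Fin.reduceSucc, Fin.isValue, Fin.coe_ofNat_eq_mod, Nat.reduceMod]
  field_simp
  ring

theorem abs_residualCoeffs_sum : ∑ i, ∑ j, |residualCoeffs i j| = 20684 := by
  norm_num [residualCoeffs, Fin.sum_univ_succ]

theorem abs_expTermCoeffs_sum : ∑ i, ∑ j, |expTermCoeffs i j| = 9712 := by
  norm_num [expTermCoeffs, Fin.sum_univ_succ]

theorem abs_Fm0_le {m l : ℝ} (hm : 0 < m) (hm1 : m ≤ 1) (hl : l ∈ Ioo (0 : ℝ) 1) :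
    |Fm0 m l| ≤ 3721 * m ^ 3 := by
  obtain ⟨K, hK, hexp⟩ := exp_integral_m_div_phi0 hm hm1 hl
  have hml : 1 ≤ 1 + m * l := by nlinarith [hl.1]
  rw [Fm0_eq hm.ne' (by linarith) (by linarith) hl.2.ne hexp, abs_div,
    abs_of_pos (by positivity : 0 < 4 * (2 + m) ^ 2 * (1 + m * l))]
  have hl' : |l| ≤ 1 := abs_le.mpr ⟨by linarith [hl.1], hl.2.le⟩
  have hm' : |m| ≤ 1 := abs_le.mpr ⟨by linarith, hm1⟩
  have hR := abs_residualCoeffs_sum ▸ abs_bivariatePoly_le residualCoeffs hl' hm'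
  have hC := abs_expTermCoeffs_sum ▸ abs_bivariatePoly_le expTermCoeffs hl' hm'
  have hnum : |m ^ 3 * bivariatePoly residualCoeffs l m
      - 2 * (K - 1) * m ^ 2 * bivariatePoly expTermCoeffs l m| ≤ 59532 * m ^ 3 :=
    calc _ ≤ m ^ 3 * |bivariatePoly residualCoeffs l m|
          + 2 * |K - 1| * m ^ 2 * |bivariatePoly expTermCoeffs l m| := by
          refine (abs_sub _ _).trans_eq ?_
          simp only [abs_mul, abs_two, abs_pow, abs_of_pos hm]
      _ ≤ m ^ 3 * 20684 + 2 * (2 * m) * m ^ 2 * 9712 := by gcongr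
      _ = 59532 * m ^ 3 := by ring
  have hden : 16 ≤ 4 * (2 + m) ^ 2 * (1 + m * l) := by nlinarith
  calc _ ≤ 59532 * m ^ 3 / 16 := div_le_div₀ (by positivity) hnum (by norm_num) hden
    _ ≤ 3721 * m ^ 3 := by linarith [pow_pos hm 3]

/-- `(φ₀, c₀) = (φ₀, 2m²)` is an approximate solution of `ℱ_m = 0` to order `m³`: there
are `C > 0` and `m₀ > 0` such that `|ℱ_m(φ₀, c₀)(λ)| ≤ C m³` for all `0 < m ≤ m₀` and all
`λ ∈ (0,1)`. -/
theorem stmt16 :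
    ∃ C > (0 : ℝ), ∃ m₀ > (0 : ℝ), ∀ m ∈ Set.Ioc (0 : ℝ) m₀, ∀ l ∈ Set.Ioo (0 : ℝ) 1,
      |Fm0 m l| ≤ C * m ^ 3 :=
  ⟨3721, by norm_num, 1, one_pos, fun _ hm _ hl => abs_Fm0_le hm.1 hm.2 hl⟩
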